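/- In any algebra satisfying (B1)–(B10), with ∼x := (x ∨ ¬x) ∧ ∼̇x and ∇x := ¬¬x, the identity x ∧ ∼x = ∼x ∧ ∇x holds for all x. -/

import Mathlib

/-! Both sides reduce to `x ∧ ∼̇x`: on the right, `¬x ∧ ¬¬x = 0` (B1) kills the `¬x` part of `∼x`,
so it suffices that `x ∧ ∼̇x ≤ ¬¬x`. Now (B9) at `(0, x)` gives `x ∧ ∼̇x ≤ ¬0`, and (B7) at `(x, x)`
with (B1) gives `¬0 = ¬x ∨ ¬¬x`; since `x ∧ ¬x = 0`, distributivity finishes. -/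

section

variable {A : Type*} [DistribLattice A] [OrderBot A] {n s : A → A}

theorem n_bot_eq_n_sup_n_n (B1 : ∀ x : A, x ⊓ n x = ⊥)
    (B7 : ∀ x y : A, n (x ⊓ n y) = n x ⊔ n (n y)) (x : A) : n ⊥ = n x ⊔ n (n x) := by
  rw [← B7 x x, B1]

theorem inf_s_le_n_bot (B9 : ∀ x y : A, (x ⊔ y) ⊓ s (x ⊔ y) ≤ x ⊔ n x) (x : A) :
    x ⊓ s x ≤ n ⊥ := by
  simpa using B9 ⊥ x

theorem inf_s_le_n_n (B1 : ∀ x : A, x ⊓ n x = ⊥)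
    (B7 : ∀ x y : A, n (x ⊓ n y) = n x ⊔ n (n y))
    (B9 : ∀ x y : A, (x ⊔ y) ⊓ s (x ⊔ y) ≤ x ⊔ n x) (x : A) : x ⊓ s x ≤ n (n x) := by
  have hle : x ⊓ s x ≤ n x ⊔ n (n x) := n_bot_eq_n_sup_n_n B1 B7 x ▸ inf_s_le_n_bot B9 x
  exact Disjoint.left_le_of_le_sup_left hle
    ((disjoint_iff.mpr (B1 x)).mono_left inf_le_left)

theorem sup_n_inf_s_inf_n_n (B1 : ∀ x : A, x ⊓ n x = ⊥) (x : A) :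
    (x ⊔ n x) ⊓ s x ⊓ n (n x) = x ⊓ s x ⊓ n (n x) := by
  rw [inf_sup_right, inf_sup_right, inf_right_comm (n x), B1 (n x), bot_inf_eq, sup_bot_eq]

end

theorem stmt_general {A : Type*} [DistribLattice A] [BoundedOrder A]
    (n s : A → A)
    (B1 : ∀ x : A, x ⊓ n x = ⊥)
    (B7 : ∀ x y : A, n (x ⊓ n y) = n x ⊔ n (n y))
    (B9 : ∀ x y : A, (x ⊔ y) ⊓ s (x ⊔ y) ≤ x ⊔ n x)
    (m : A → A) (hm : ∀ x : A, m x = (x ⊔ n x) ⊓ s x)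
    (d : A → A) (hd : ∀ x : A, d x = n (n x)) :
    ∀ x : A, x ⊓ m x = m x ⊓ d x := by
  intro x
  rw [hm, hd, sup_n_inf_s_inf_n_n B1, ← inf_assoc, inf_sup_self,
    inf_eq_left.mpr (inf_s_le_n_n B1 B7 B9 x)]

theorem stmt {A : Type*} [DistribLattice A] [BoundedOrder A]
    (n s : A → A)
    (B1 : ∀ x : A, x ⊓ n x = ⊥)
    (B2 : ∀ x : A, x ⊔ s x = ⊤)
    (B3 : ∀ x : A, n x ⊓ s (n x) = ⊥)
    (B4 : ∀ x : A, s x ⊔ n (s x) = ⊤)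
    (B5 : ∀ x y : A, s (x ⊓ y) = s x ⊔ s y)
    (B6 : ∀ x y : A, n (x ⊔ y) = n x ⊓ n y)
    (B7 : ∀ x y : A, n (x ⊓ n y) = n x ⊔ n (n y))
    (B8 : ∀ x y : A, s (x ⊔ s y) = s x ⊓ s (s y))
    (B9 : ∀ x y : A, (x ⊔ y) ⊓ s (x ⊔ y) ≤ x ⊔ n x)
    (B10 : ∀ x y : A, x ⊓ s x ⊓ y ⊓ s y ≤ s (x ⊔ y))
    (m : A → A) (hm : ∀ x : A, m x = (x ⊔ n x) ⊓ s x)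
    (d : A → A) (hd : ∀ x : A, d x = n (n x)) :
    ∀ x : A, x ⊓ m x = m x ⊓ d x :=
  stmt_general n s B1 B7 B9 m hm d hd
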